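/- arXiv:2604.01559 — 2 statements merged into one kernel-verified Lean document; each statement's English description precedes it below -/
import Mathlib

section
/- Let k, l ≥ 1 be integers. Then ∫_{{(r₁,r₂) ∈ (0,1)² : r₁^k r₂^l < ε}} r₁^{2k−1} r₂^{2l+1} dr₁ dr₂ = ε²/(4k) − l ε^{2+2/l}/(4k(l+1)) for all 0 < ε < 1. -/
open MeasureTheory Set Filter

/-! Integrate in `r₁` first. For fixed `r₂ = y ∈ (0,1)` the slice is the interval
`0 < r₁ < min 1 (ε / y^l)^{1/k}`, so the inner integral is
`y^{2l+1} min(1, ε/y^l)² / (2k) = min(y^{2l+1}, ε² y) / (2k)`.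
Writing `ε = δ^l`, the minimum changes branch at `y = δ`, and the two pieces give
`δ^{2l+2}/(2l+2) + ε²(1 - δ²)/2`, where `ε² δ² = ε^{2+2/l}`. -/

theorem integral_Ioo_zero_pow (n : ℕ) {b : ℝ} (hb : 0 ≤ b) :
    ∫ x in Ioo 0 b, x ^ n = b ^ (n + 1) / (n + 1) := by
  rw [← integral_Ioc_eq_integral_Ioo, ← intervalIntegral.integral_of_le hb, integral_pow]
  simp

theorem min_one_pow {r : ℝ} (hr : 0 ≤ r) (n : ℕ) : min 1 r ^ n = min 1 (r ^ n) := by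
  rcases le_total 1 r with h | h
  · simp [h, one_le_pow₀ h]
  · simp [h, pow_le_one₀ hr h]

theorem setOf_mem_Ioo_pow_lt {k : ℕ} (hk : k ≠ 0) {b : ℝ} (hb : 0 ≤ b) :
    {x : ℝ | 0 < x ∧ x < 1 ∧ x ^ k < b} = Ioo 0 (min 1 (b ^ (k : ℝ)⁻¹)) := by
  ext x
  simp only [mem_ofPred_eq, mem_Ioo, lt_min_iff]
  refine and_congr_right fun hx => and_congr_right fun _ => ?_
  conv_lhs => rw [← Real.rpow_inv_natCast_pow hb hk]
  exact pow_lt_pow_iff_left₀ hx.le (by positivity) hk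

theorem integral_setOf_mem_Ioo_pow_lt {k : ℕ} (hk : k ≠ 0) {b : ℝ} (hb : 0 ≤ b) :
    ∫ x in {x : ℝ | 0 < x ∧ x < 1 ∧ x ^ k < b}, x ^ (2 * k - 1) = min 1 b ^ 2 / (2 * k) := by
  have hc : (min 1 (b ^ (k : ℝ)⁻¹)) ^ k = min 1 b := by
    rw [min_one_pow (by positivity), Real.rpow_inv_natCast_pow hb hk]
  have h2k : ((2 * k - 1 : ℕ) : ℝ) + 1 = 2 * k := by norm_cast; omega
  rw [setOf_mem_Ioo_pow_lt hk hb, integral_Ioo_zero_pow _ (by positivity), h2k,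
    Nat.sub_add_cancel (by omega), mul_comm 2 k, pow_mul, hc, mul_comm]

theorem integral_setOf_mem_Ioo_pow_mul_lt {k : ℕ} (hk : k ≠ 0) (l : ℕ) {a y : ℝ}
    (ha : 0 ≤ a) (hy : 0 < y) :
    ∫ x in {x : ℝ | 0 < x ∧ x < 1 ∧ x ^ k * y ^ l < a}, x ^ (2 * k - 1) * y ^ (2 * l + 1)
      = min (y ^ (2 * l + 1)) (a ^ 2 * y) / (2 * k) := by
  have hyl : 0 < y ^ l := pow_pos hy l
  have hset : {x : ℝ | 0 < x ∧ x < 1 ∧ x ^ k * y ^ l < a}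
      = {x : ℝ | 0 < x ∧ x < 1 ∧ x ^ k < a / y ^ l} := by
    simp_rw [lt_div_iff₀ hyl]
  have hmin : y ^ (2 * l + 1) * min 1 (a / y ^ l) ^ 2 = min (y ^ (2 * l + 1)) (a ^ 2 * y) := by
    rw [min_one_pow (by positivity), mul_min_of_nonneg _ _ (by positivity), mul_one]
    congr 1
    field_simp
    ring
  rw [hset, integral_mul_const, integral_setOf_mem_Ioo_pow_lt hk (by positivity), ← hmin]
  ring

theorem integral_sublevel_monomial {k : ℕ} (hk : k ≠ 0) (l : ℕ) {a : ℝ} (ha : 0 ≤ a) :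
    ∫ p in {p : ℝ × ℝ | 0 < p.1 ∧ p.1 < 1 ∧ 0 < p.2 ∧ p.2 < 1 ∧ p.1 ^ k * p.2 ^ l < a},
        p.1 ^ (2 * k - 1) * p.2 ^ (2 * l + 1)
      = (∫ y in (0 : ℝ)..1, min (y ^ (2 * l + 1)) (a ^ 2 * y)) / (2 * k) := by
  set S := {p : ℝ × ℝ | 0 < p.1 ∧ p.1 < 1 ∧ 0 < p.2 ∧ p.2 < 1 ∧ p.1 ^ k * p.2 ^ l < a}
  set f : ℝ × ℝ → ℝ := fun p => p.1 ^ (2 * k - 1) * p.2 ^ (2 * l + 1)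
  have hS : MeasurableSet S := by measurability
  have hf : IntegrableOn f S :=
    ((by fun_prop : Continuous f).continuousOn.integrableOn_compact
      (isCompact_Icc.prod isCompact_Icc)).mono_set
      fun p hp => ⟨⟨hp.1.le, hp.2.1.le⟩, ⟨hp.2.2.1.le, hp.2.2.2.1.le⟩⟩
  have hslice (y : ℝ) : ∫ x, S.indicator f (x, y)
      = (Ioo 0 1).indicator (fun y => min (y ^ (2 * l + 1)) (a ^ 2 * y) / (2 * k)) y := by
    by_cases hy : y ∈ Ioo 0 1
    · have hS_y : (fun x => S.indicator f (x, y))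
          = {x : ℝ | 0 < x ∧ x < 1 ∧ x ^ k * y ^ l < a}.indicator
            (fun x => x ^ (2 * k - 1) * y ^ (2 * l + 1)) := by
        ext x
        simp [S, f, indicator_apply, hy.1, hy.2]
      rw [hS_y, integral_indicator (by measurability), indicator_of_mem hy,
        integral_setOf_mem_Ioo_pow_mul_lt hk l ha hy.1]
    · rw [indicator_of_notMem hy]
      refine integral_eq_zero_of_ae (.of_forall fun x => indicator_of_notMem ?_ _)
      exact fun hp => hy ⟨hp.2.2.1, hp.2.2.2.1⟩
  calc ∫ p in S, f p = ∫ y, ∫ x, S.indicator f (x, y) := by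
        rw [← integral_indicator hS, Measure.volume_eq_prod]
        exact integral_prod_symm _ ((integrable_indicator_iff hS).mpr hf)
    _ = _ := by
        rw [funext hslice, integral_indicator measurableSet_Ioo, ← integral_Ioc_eq_integral_Ioo,
          ← intervalIntegral.integral_of_le zero_le_one, intervalIntegral.integral_div]

theorem integral_min_pow_mul (l : ℕ) {δ : ℝ} (hδ0 : 0 ≤ δ) (hδ1 : δ ≤ 1) :
    ∫ y in (0 : ℝ)..1, min (y ^ (2 * l + 1)) (δ ^ (2 * l) * y)
      = δ ^ (2 * l) / 2 - l * δ ^ (2 * l + 2) / (2 * (l + 1)) := by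
  have hle : EqOn (fun y : ℝ => min (y ^ (2 * l + 1)) (δ ^ (2 * l) * y))
      (fun y => y ^ (2 * l + 1)) (uIcc 0 δ) := by
    intro y hy
    rw [uIcc_of_le hδ0] at hy
    refine min_eq_left ?_
    rw [pow_succ]
    exact mul_le_mul_of_nonneg_right (pow_le_pow_left₀ hy.1 hy.2 _) hy.1
  have hge : EqOn (fun y : ℝ => min (y ^ (2 * l + 1)) (δ ^ (2 * l) * y))
      (fun y => δ ^ (2 * l) * y) (uIcc δ 1) := by
    intro y hy
    rw [uIcc_of_le hδ1] at hy
    refine min_eq_right ?_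
    rw [pow_succ]
    exact mul_le_mul_of_nonneg_right (pow_le_pow_left₀ hδ0 hy.1 _) (hδ0.trans hy.1)
  have hint : Continuous fun y : ℝ => min (y ^ (2 * l + 1)) (δ ^ (2 * l) * y) := by fun_prop
  rw [← intervalIntegral.integral_add_adjacent_intervals (b := δ)
      (hint.intervalIntegrable _ _) (hint.intervalIntegrable _ _),
    intervalIntegral.integral_congr hle, intervalIntegral.integral_congr hge,
    integral_pow, intervalIntegral.integral_const_mul, integral_id]
  push_cast
  field_simp
  ring

/-- For integers `k, l ≥ 1` and `0 < ε < 1`,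
`∫_{{(r₁,r₂) ∈ (0,1)² : r₁^k r₂^l < ε}} r₁^{2k−1} r₂^{2l+1} dr₁ dr₂
  = ε²/(4k) − l ε^{2+2/l}/(4k(l+1))`. -/
theorem stmt_7 (k l : ℕ) (hk : 1 ≤ k) (hl : 1 ≤ l) :
    ∀ ε ∈ Set.Ioo (0:ℝ) 1,
      (∫ p in {p : ℝ × ℝ | 0 < p.1 ∧ p.1 < 1 ∧ 0 < p.2 ∧ p.2 < 1 ∧ p.1^k * p.2^l < ε},
        p.1 ^ (2*k - 1) * p.2 ^ (2*l + 1))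
      = ε^2 / (4*(k:ℝ)) - (l:ℝ) * ε ^ ((2:ℝ) + 2/(l:ℝ)) / (4*(k:ℝ)*((l:ℝ)+1)) := by
  rintro ε ⟨hε0, hε1⟩
  obtain ⟨δ, hδ0, hδ1, rfl⟩ : ∃ δ : ℝ, 0 ≤ δ ∧ δ ≤ 1 ∧ δ ^ l = ε :=
    ⟨ε ^ (l : ℝ)⁻¹, by positivity, Real.rpow_le_one hε0.le hε1.le (by positivity),
      Real.rpow_inv_natCast_pow hε0.le (by omega)⟩
  have hδ_rpow : (δ ^ l) ^ ((2 : ℝ) + 2 / l) = δ ^ (2 * l + 2) := by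
    rw [← Real.rpow_natCast δ l, ← Real.rpow_mul hδ0, ← Real.rpow_natCast]
    congr 1
    push_cast
    field_simp
  rw [integral_sublevel_monomial (by omega) l hε0.le, hδ_rpow, ← pow_mul, mul_comm l 2,
    integral_min_pow_mul l hδ0 hδ1]
  field_simp
  ring
end

section
/- Let f be holomorphic near 0 in ℂⁿ, nonconstant with f(0)=0, let α ∈ [0,1), and suppose the energy bound ∫_{{|f| < ε}} |∂f|² dV = O(ε²) holds. Then for every δ < 2, the weighted gradient |∂f|²/|f|^δ is locally integrable near 0. -/
/-!
Cover `{|f| < ε₀}` by the zero set of `f` and the dyadic shells `{ε₀/2^(j+1) ≤ |f| < ε₀/2^j}`.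
With `β = max δ 0 < 2` and `ε₀ ≤ 1`, the weight `|f|^(-δ)` is at most `(ε₀/2^(j+1))^(-β)` on the
`j`-th shell, while the energy bound gives `∫ |∂f|² ≤ C (ε₀/2^j)²` there, so the shell contributes
`O(2^(-j(2-β)))`: a convergent geometric series. On the zero set the weight may be infinite, but
the energy bound at every scale forces `|∂f|² = 0` almost everywhere there.
-/

open MeasureTheory Set Filter

noncomputable instance (m : ℕ) : MeasurableSpace (EuclideanSpace ℂ (Fin m)) :=
  WithLp.measurableSpace 2 (Fin m → ℂ)

instance (m : ℕ) : BorelSpace (EuclideanSpace ℂ (Fin m)) := PiLp.borelSpace 2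

open Topology
open scoped ENNReal

theorem subset_iInter_union_iUnion_diff_succ {α : Type*} (O : ℕ → Set α) :
    O 0 ⊆ (⋂ j, O j) ∪ ⋃ j, O j \ O (j + 1) := by
  classical
  intro x hx
  by_cases hall : ∀ j, x ∈ O j
  · exact Or.inl (mem_iInter.mpr hall)
  push Not at hall
  obtain ⟨k, hk⟩ : ∃ k, Nat.find hall = k + 1 :=
    Nat.exists_eq_succ_of_ne_zero fun h => (h ▸ Nat.find_spec hall) hx
  refine Or.inr (mem_iUnion.mpr ⟨k, not_not.mp (Nat.find_min hall (by omega)), ?_⟩)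
  exact hk ▸ Nat.find_spec hall

theorem ENNReal.rpow_neg_le_rpow_neg_of_le {a x : ℝ≥0∞} {β δ : ℝ} (hax : a ≤ x) (hx : x ≤ 1)
    (hβ : 0 ≤ β) (hδβ : δ ≤ β) : x ^ (-δ) ≤ a ^ (-β) := by
  calc x ^ (-δ) ≤ x ^ (-β) := ENNReal.rpow_le_rpow_of_exponent_ge hx (neg_le_neg hδβ)
    _ ≤ a ^ (-β) := by
      rw [ENNReal.rpow_neg, ENNReal.rpow_neg]
      exact ENNReal.inv_le_inv.mpr (ENNReal.rpow_le_rpow hax hβ)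

theorem Real.div_two_rpow_neg_mul_sq {x : ℝ} (hx : 0 < x) (β : ℝ) :
    (x / 2) ^ (-β) * x ^ 2 = 2 ^ β * x ^ (2 - β) := by
  rw [Real.div_rpow hx.le zero_le_two, Real.rpow_neg zero_le_two, div_inv_eq_mul,
    sub_eq_add_neg, Real.rpow_add hx, ← Real.rpow_natCast x 2]
  push_cast
  ring

theorem Real.div_two_pow_rpow {ε : ℝ} (hε : 0 ≤ ε) (γ : ℝ) (j : ℕ) :
    (ε / 2 ^ j) ^ γ = ε ^ γ * ((2 ^ γ)⁻¹) ^ j := by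
  rw [Real.div_rpow hε (by positivity), ← Real.rpow_pow_comm zero_le_two, inv_pow, div_eq_mul_inv]

section Dyadic

variable {X : Type*} [MeasurableSpace X] {μ : Measure X} {g : X → ℝ≥0∞}

theorem setLIntegral_iInter_mul_eq_zero (hg : Measurable g) {O : ℕ → Set X} {b : ℕ → ℝ≥0∞}
    (hb : Tendsto b atTop (𝓝 0)) (hO : ∀ j, ∫⁻ x in O j, g x ∂μ ≤ b j) (w : X → ℝ≥0∞) :
    ∫⁻ x in ⋂ j, O j, g x * w x ∂μ = 0 := by
  have hzero : ∫⁻ x in ⋂ j, O j, g x ∂μ = 0 :=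
    le_antisymm (ge_of_tendsto' hb fun j => (lintegral_mono_set (iInter_subset O j)).trans (hO j))
      zero_le
  rw [lintegral_eq_zero_iff hg] at hzero
  calc ∫⁻ x in ⋂ j, O j, g x * w x ∂μ = ∫⁻ _ in ⋂ j, O j, 0 ∂μ :=
        lintegral_congr_ae (hzero.mono fun x hx => by simp_all)
    _ = 0 := lintegral_zero

theorem setLIntegral_mul_rpow_neg_le (hg : Measurable g) {u : X → ℝ} {t : Set X}
    (ht : MeasurableSet t) {a β δ : ℝ} (hβ : 0 ≤ β) (hδβ : δ ≤ β)
    (hu : ∀ x ∈ t, a ≤ u x ∧ u x ≤ 1) :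
    ∫⁻ x in t, g x * ENNReal.ofReal (u x) ^ (-δ) ∂μ
      ≤ ENNReal.ofReal a ^ (-β) * ∫⁻ x in t, g x ∂μ := by
  rw [← lintegral_const_mul _ hg]
  refine setLIntegral_mono' ht fun x hx => ?_
  rw [mul_comm]
  gcongr
  exact ENNReal.rpow_neg_le_rpow_neg_of_le (ENNReal.ofReal_le_ofReal (hu x hx).1)
    (ENNReal.ofReal_le_one.mpr (hu x hx).2) hβ hδβ

variable {s : Set X} {u : X → ℝ}

theorem setLIntegral_sublevel_diff_half_le (hg : Measurable g)
    (hmeas : ∀ ε, MeasurableSet {x ∈ s | u x < ε}) {C ε β δ : ℝ} (hε : 0 < ε) (hε1 : ε ≤ 1)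
    (hβ : 0 ≤ β) (hδβ : δ ≤ β)
    (hE : ∫⁻ x in {x ∈ s | u x < ε}, g x ∂μ ≤ ENNReal.ofReal (C * ε ^ 2)) :
    ∫⁻ x in {x ∈ s | u x < ε} \ {x ∈ s | u x < ε / 2}, g x * ENNReal.ofReal (u x) ^ (-δ) ∂μ
      ≤ ENNReal.ofReal (2 ^ β * C * ε ^ (2 - β)) := by
  have hu : ∀ x ∈ {x ∈ s | u x < ε} \ {x ∈ s | u x < ε / 2}, ε / 2 ≤ u x ∧ u x ≤ 1 :=
    fun x ⟨⟨hxs, hxε⟩, hx⟩ => ⟨not_lt.mp fun h => hx ⟨hxs, h⟩, by linarith⟩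
  calc _ ≤ ENNReal.ofReal (ε / 2) ^ (-β)
          * ∫⁻ x in {x ∈ s | u x < ε} \ {x ∈ s | u x < ε / 2}, g x ∂μ :=
        setLIntegral_mul_rpow_neg_le hg ((hmeas _).diff (hmeas _)) hβ hδβ hu
    _ ≤ ENNReal.ofReal ((ε / 2) ^ (-β)) * ENNReal.ofReal (C * ε ^ 2) := by
        rw [ENNReal.ofReal_rpow_of_pos (half_pos hε)]
        gcongr
        exact (lintegral_mono_set sdiff_subset).trans hE
    _ = ENNReal.ofReal (2 ^ β * C * ε ^ (2 - β)) := by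
        rw [← ENNReal.ofReal_mul (by positivity), mul_left_comm, Real.div_two_rpow_neg_mul_sq hε,
          mul_left_comm, mul_assoc]

theorem exists_setLIntegral_sublevel_mul_rpow_neg_lt_top (hg : Measurable g)
    (hmeas : ∀ ε, MeasurableSet {x ∈ s | u x < ε}) {C ε₁ : ℝ} (hε₁ : 0 < ε₁)
    (henergy : ∀ ε ∈ Ioo 0 ε₁,
      ∫⁻ x in {x ∈ s | u x < ε}, g x ∂μ ≤ ENNReal.ofReal (C * ε ^ 2))
    {δ : ℝ} (hδ : δ < 2) :
    ∃ ε₀ > 0, ∫⁻ x in {x ∈ s | u x < ε₀}, g x * ENNReal.ofReal (u x) ^ (-δ) ∂μ < ∞ := by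
  obtain ⟨ε₀, hε₀, hε₀ε₁, hε₀1⟩ : ∃ ε₀ : ℝ, 0 < ε₀ ∧ ε₀ < ε₁ ∧ ε₀ ≤ 1 :=
    ⟨min ε₁ 1 / 2, by positivity, by linarith [min_le_left ε₁ 1], by linarith [min_le_right ε₁ 1]⟩
  obtain ⟨β, hβ, hδβ, hβ2⟩ : ∃ β : ℝ, 0 ≤ β ∧ δ ≤ β ∧ β < 2 :=
    ⟨max δ 0, le_max_right δ 0, le_max_left δ 0, max_lt hδ two_pos⟩
  set r : ℝ := (2 ^ (2 - β))⁻¹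
  have hr : r < 1 := inv_lt_one_of_one_lt₀ <| Real.one_lt_rpow one_lt_two (by linarith)
  set O : ℕ → Set X := fun j => {x ∈ s | u x < ε₀ / 2 ^ j}
  have hρ : ∀ j : ℕ, 0 < ε₀ / 2 ^ j ∧ ε₀ / 2 ^ j ≤ ε₀ := fun j =>
    ⟨by positivity, div_le_self hε₀.le (one_le_pow₀ one_le_two)⟩
  have hE : ∀ j, ∫⁻ x in O j, g x ∂μ ≤ ENNReal.ofReal (C * (ε₀ / 2 ^ j) ^ 2) := fun j =>
    henergy _ ⟨(hρ j).1, (hρ j).2.trans_lt hε₀ε₁⟩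
  have hshell : ∀ j, ∫⁻ x in O j \ O (j + 1), g x * ENNReal.ofReal (u x) ^ (-δ) ∂μ
      ≤ ENNReal.ofReal (2 ^ β * C * ε₀ ^ (2 - β)) * ENNReal.ofReal r ^ j := by
    intro j
    have h := setLIntegral_sublevel_diff_half_le hg hmeas (hρ j).1
      ((hρ j).2.trans hε₀1) hβ hδβ (hE j)
    rwa [div_div, ← pow_succ, Real.div_two_pow_rpow hε₀.le, ← mul_assoc,
      ENNReal.ofReal_mul' (by positivity), ENNReal.ofReal_pow (by positivity)] at h
  have hzero : ∫⁻ x in ⋂ j, O j, g x * ENNReal.ofReal (u x) ^ (-δ) ∂μ = 0 := by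
    refine setLIntegral_iInter_mul_eq_zero hg ?_ hE _
    have hρ0 := (tendsto_pow_atTop_atTop_of_one_lt one_lt_two).const_div_atTop ε₀
    simpa using ENNReal.tendsto_ofReal ((hρ0.pow 2).const_mul C)
  refine ⟨ε₀, hε₀, ?_⟩
  calc ∫⁻ x in {x ∈ s | u x < ε₀}, g x * ENNReal.ofReal (u x) ^ (-δ) ∂μ
      ≤ ∫⁻ x in (⋂ j, O j) ∪ ⋃ j, O j \ O (j + 1), g x * ENNReal.ofReal (u x) ^ (-δ) ∂μ :=
        lintegral_mono_set (by simpa [O] using subset_iInter_union_iUnion_diff_succ O)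
    _ ≤ 0 + ∑' j, ∫⁻ x in O j \ O (j + 1), g x * ENNReal.ofReal (u x) ^ (-δ) ∂μ := by
        rw [← hzero]
        exact (lintegral_union_le _ _ _).trans (add_le_add le_rfl (lintegral_iUnion_le _ _))
    _ ≤ ENNReal.ofReal (2 ^ β * C * ε₀ ^ (2 - β)) * ∑' j, ENNReal.ofReal r ^ j := by
        rw [zero_add, ← ENNReal.tsum_mul_left]
        exact ENNReal.tsum_le_tsum hshell
    _ < ∞ := ENNReal.mul_lt_top ENNReal.ofReal_lt_top
        (tsum_geometric_lt_top.mpr (ENNReal.ofReal_lt_one.mpr hr))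

end Dyadic

theorem stmt_18_general {n : ℕ}
    (U : Set (EuclideanSpace ℂ (Fin n))) (hU_open : IsOpen U)
    (h0U : (0 : EuclideanSpace ℂ (Fin n)) ∈ U)
    (f : EuclideanSpace ℂ (Fin n) → ℂ) (hf : DifferentiableOn ℂ f U)
    (hf0 : f 0 = 0)
    (C₁ ε₁ : ℝ) (hε₁ : 0 < ε₁)
    (henergy : ∀ ε ∈ Set.Ioo (0:ℝ) ε₁,
      (∫⁻ z in {z ∈ U | ‖f z‖ < ε}, ENNReal.ofReal (‖fderiv ℂ f z‖ ^ 2))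
        ≤ ENNReal.ofReal (C₁ * ε ^ 2)) :
    ∀ δ : ℝ, δ < 2 →
      ∃ V ∈ nhds (0 : EuclideanSpace ℂ (Fin n)),
        (∫⁻ z in V,
          ENNReal.ofReal (‖fderiv ℂ f z‖ ^ 2) * (ENNReal.ofReal ‖f z‖) ^ (-δ)) < ⊤ := by
  intro δ hδ
  have hopen : ∀ ε, IsOpen {z ∈ U | ‖f z‖ < ε} := fun ε =>
    hf.continuousOn.norm.isOpen_inter_preimage hU_open isOpen_Iio
  have hg : Measurable fun z => ENNReal.ofReal (‖fderiv ℂ f z‖ ^ 2) :=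
    ENNReal.measurable_ofReal.comp ((measurable_fderiv ℂ f).norm.pow_const 2)
  obtain ⟨ε₀, hε₀, hfinite⟩ := exists_setLIntegral_sublevel_mul_rpow_neg_lt_top hg
    (fun ε => (hopen ε).measurableSet) hε₁ henergy hδ
  exact ⟨_, (hopen ε₀).mem_nhds ⟨h0U, by simpa [hf0] using hε₀⟩, hfinite⟩

/-- Let `f` be holomorphic near `0` in `ℂⁿ`, nonconstant with `f 0 = 0`, let
`α ∈ [0,1)`, and suppose the energy bound `∫_{{|f| < ε}} |∂f|² dV = O(ε²)` holds.
Then for every `δ < 2`, the weighted gradient `|∂f|²/|f|^δ` is locally integrable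
near `0`. -/
theorem stmt_18 {n : ℕ} (hn : 0 < n)
    (U : Set (EuclideanSpace ℂ (Fin n))) (hU_open : IsOpen U)
    (h0U : (0 : EuclideanSpace ℂ (Fin n)) ∈ U)
    (f : EuclideanSpace ℂ (Fin n) → ℂ) (hf : DifferentiableOn ℂ f U)
    (hf0 : f 0 = 0) (hnc : ¬ ∀ z ∈ U, f z = 0)
    (α : ℝ) (hα : α ∈ Set.Ico (0:ℝ) 1)
    (C₁ ε₁ : ℝ) (hC₁ : 0 < C₁) (hε₁ : 0 < ε₁)
    (henergy : ∀ ε ∈ Set.Ioo (0:ℝ) ε₁,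
      (∫⁻ z in {z ∈ U | ‖f z‖ < ε}, ENNReal.ofReal (‖fderiv ℂ f z‖ ^ 2))
        ≤ ENNReal.ofReal (C₁ * ε ^ 2)) :
    ∀ δ : ℝ, δ < 2 →
      ∃ V ∈ nhds (0 : EuclideanSpace ℂ (Fin n)),
        (∫⁻ z in V,
          ENNReal.ofReal (‖fderiv ℂ f z‖ ^ 2) * (ENNReal.ofReal ‖f z‖) ^ (-δ)) < ⊤ :=
  stmt_18_general U hU_open h0U f hf hf0 C₁ ε₁ hε₁ henergy
end
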